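/- arXiv:1709.04002 — 3 statements merged into one kernel-verified Lean document; each statement's English description precedes it below -/
import Mathlib

section
/- Let L ⊂ ℝⁿ be a linear subspace and let q be a polynomial on ℝⁿ vanishing identically on L. Then there exists a constant C such that q(x)² ≤ C · dist(x, L)² for all x in the closed unit ball. In particular, if p is a quadratic form with p(x) ≥ c·dist(x,L)² for some c > 0, then q²/p is bounded on B_1 ∖ L. -/
/-!
A polynomial is smooth, hence Lipschitz on the compact convex ball. The nearest point of `L` to a
point `x` of the ball is its orthogonal projection, which stays in the ball and where `q` vanishes,
so `|q(x)| ≤ K · dist(x, L)`. Since `p ≥ c · dist(·, L)²`, the quotient `q²/p` is then at most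
`K² / c` (and is `0` by convention where `p` vanishes).
-/

open Metric NNReal

theorem MvPolynomial.analyticOnNhd_eval_euclidean {ι : Type*} [Fintype ι]
    (q : MvPolynomial ι ℝ) :
    AnalyticOnNhd ℝ (fun x : EuclideanSpace ℝ ι => MvPolynomial.eval (fun i => x i) q) Set.univ :=
  AnalyticOnNhd.eval_continuousLinearMap' (𝕜 := ℝ) (E := EuclideanSpace ℝ ι) (B := ℝ)
    (fun i => EuclideanSpace.proj i) q

theorem Submodule.infDist_eq_norm_sub_starProjection {𝕜 E : Type*} [RCLike 𝕜]
    [NormedAddCommGroup E] [InnerProductSpace 𝕜 E] (K : Submodule 𝕜 E)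
    [K.HasOrthogonalProjection] (x : E) :
    infDist x K = ‖x - K.starProjection x‖ := by
  simp only [infDist_eq_iInf, starProjection_minimal, dist_eq_norm]
  rfl

theorem norm_le_mul_infDist_of_lipschitzOnWith {𝕜 E F : Type*} [RCLike 𝕜]
    [NormedAddCommGroup E] [InnerProductSpace 𝕜 E] [SeminormedAddCommGroup F]
    (K : Submodule 𝕜 E) [K.HasOrthogonalProjection] {f : E → F} {C : ℝ≥0} {r : ℝ}
    (hf : LipschitzOnWith C f (closedBall 0 r)) (hK : ∀ y ∈ K, f y = 0) {x : E}
    (hx : x ∈ closedBall 0 r) :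
    ‖f x‖ ≤ C * infDist x K := by
  have hPx : K.starProjection x ∈ closedBall 0 r := by
    rw [mem_closedBall_zero_iff] at hx ⊢
    exact (K.norm_starProjection_apply_le x).trans hx
  calc ‖f x‖ = dist (f x) (f (K.starProjection x)) := by
        rw [hK _ (K.starProjection_apply_mem x), dist_zero_right]
    _ ≤ C * dist x (K.starProjection x) := hf.dist_le_mul x hx _ hPx
    _ = C * infDist x K := by rw [K.infDist_eq_norm_sub_starProjection, dist_eq_norm]

theorem MvPolynomial.exists_sq_eval_le_mul_sq_infDist {ι : Type*} [Fintype ι]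
    (L : Submodule ℝ (EuclideanSpace ℝ ι)) (q : MvPolynomial ι ℝ)
    (hq : ∀ x ∈ L, eval (fun i => x i) q = 0) (r : ℝ) :
    ∃ C : ℝ, 0 ≤ C ∧ ∀ x ∈ closedBall (0 : EuclideanSpace ℝ ι) r,
      (eval (fun i => x i) q) ^ 2 ≤ C * infDist x L ^ 2 := by
  obtain ⟨K, hK⟩ :=
    (q.analyticOnNhd_eval_euclidean.contDiff (n := 1)).contDiffOn.exists_lipschitzOnWith one_ne_zero
      (convex_closedBall 0 r) (isCompact_closedBall 0 r)
  refine ⟨K ^ 2, by positivity, fun x hx => ?_⟩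
  have h := norm_le_mul_infDist_of_lipschitzOnWith L hK hq hx
  rw [Real.norm_eq_abs] at h
  calc (eval (fun i => x i) q) ^ 2 = |eval (fun i => x i) q| ^ 2 := (sq_abs _).symm
    _ ≤ (K * infDist x L) ^ 2 := by gcongr
    _ = K ^ 2 * infDist x L ^ 2 := mul_pow _ _ _

theorem div_le_div_of_le_mul_of_mul_le {a b p C c : ℝ} (hC : 0 ≤ C) (hc : 0 < c) (hb : 0 ≤ b)
    (ha : a ≤ C * b) (hp : c * b ≤ p) : a / p ≤ C / c := by
  rcases (mul_nonneg hc.le hb |>.trans hp).eq_or_lt with h | h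
  · rw [← h, div_zero]; positivity
  · rw [div_le_iff₀ h]
    calc a ≤ C * b := ha
      _ = C / c * (c * b) := by field_simp
      _ ≤ C / c * p := by gcongr

/-- Let `L ⊆ ℝⁿ` be a linear subspace and `q` a polynomial vanishing
identically on `L`. Then there is `C` with `q(x)² ≤ C · dist(x, L)²` on the closed unit
ball. In particular, if `p ≥ c · dist(·, L)²` with `c > 0` (e.g. a positive semidefinite
quadratic form vanishing exactly on `L`), then `q²/p` is bounded on `B₁ \ L`. -/
theorem stmt8 {n : ℕ} (L : Submodule ℝ (EuclideanSpace ℝ (Fin n)))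
    (q : MvPolynomial (Fin n) ℝ)
    (hq : ∀ x ∈ L, MvPolynomial.eval (fun i => x i) q = 0) :
    (∃ C : ℝ, ∀ x ∈ closedBall (0 : EuclideanSpace ℝ (Fin n)) 1,
      (MvPolynomial.eval (fun i => x i) q)^2 ≤ C * (infDist x (L : Set _))^2) ∧
    ∀ (p : EuclideanSpace ℝ (Fin n) → ℝ) (c : ℝ), 0 < c →
      (∀ x, c * (infDist x (L : Set _))^2 ≤ p x) →
      ∃ C' : ℝ, ∀ x ∈ closedBall (0 : EuclideanSpace ℝ (Fin n)) 1,
        x ∉ (L : Set _) → (MvPolynomial.eval (fun i => x i) q)^2 / p x ≤ C' := by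
  obtain ⟨C, hC, hbound⟩ := q.exists_sq_eval_le_mul_sq_infDist L hq 1
  refine ⟨⟨C, hbound⟩, fun p c hc hp => ⟨C / c, fun x hx _ => ?_⟩⟩
  exact div_le_div_of_le_mul_of_mul_le hC hc (by positivity) (hbound x hx) (hp x)
end

section
/- Let f : ℝⁿ → ℝ be continuous and homogeneous of degree λ > 0 with respect to two distinct points 0 and z, i.e. f(t x) = t^λ f(x) and f(z + t(x − z)) = t^λ f(x) for all x ∈ ℝⁿ and t > 0. Then f is invariant under translations in the direction z: f(x + s z) = f(x) for all x ∈ ℝⁿ and s ∈ ℝ. -/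
/-- Let `f : ℝⁿ → ℝ` be continuous and homogeneous of degree `λ > 0`
with respect to the two distinct points `0` and `z ≠ 0`. Then `f` is invariant under
translations in the direction `z`: `f (x + s • z) = f x` for all `x` and `s ∈ ℝ`. -/
theorem stmt9 {n : ℕ} (f : EuclideanSpace ℝ (Fin n) → ℝ) (hf : Continuous f)
    (lam : ℝ) (hlam : 0 < lam) (z : EuclideanSpace ℝ (Fin n)) (hz : z ≠ 0)
    (h0 : ∀ (x : EuclideanSpace ℝ (Fin n)) (t : ℝ), 0 < t →
      f (t • x) = t ^ lam * f x)
    (hz' : ∀ (x : EuclideanSpace ℝ (Fin n)) (t : ℝ), 0 < t →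
      f (z + t • (x - z)) = t ^ lam * f x) :
    ∀ (x : EuclideanSpace ℝ (Fin n)) (s : ℝ), f (x + s • z) = f x := by
  have key : ∀ (y : EuclideanSpace ℝ (Fin n)) (c : ℝ), c < 1 → f (y + c • z) = f y := by
    intro y c hc
    have ht : (0:ℝ) < 1 - c := by linarith
    have h1 := hz' ((1-c)⁻¹ • y) (1-c) ht
    have h2 := h0 ((1-c)⁻¹ • y) (1-c) ht
    have hy : (1-c) • ((1-c)⁻¹ • y) = y := smul_inv_smul₀ (ne_of_gt ht) y
    have harg : z + (1-c) • ((1-c)⁻¹ • y - z) = y + c • z := by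
      rw [smul_sub, hy]; module
    rw [hy] at h2
    rw [← harg, h1, ← h2]
  intro x s
  obtain ⟨m, hm⟩ := exists_nat_gt (max s 1)
  have hm1 : (1:ℝ) < m := lt_of_le_of_lt (le_max_right s 1) hm
  have hm0 : (0:ℝ) < m := by linarith
  have hc : s / m < 1 := (div_lt_one hm0).mpr (lt_of_le_of_lt (le_max_left s 1) hm)
  have step : ∀ k : ℕ, f (x + ((k : ℝ) * (s/m)) • z) = f x := by
    intro k
    induction k with
    | zero => simp
    | succ k ih =>
      have harg : x + (((k:ℝ)+1) * (s/m)) • z = (x + ((k:ℝ) * (s/m)) • z) + (s/m) • z := by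
        module
      push_cast
      rw [harg, key _ _ hc, ih]
  have := step m
  rwa [mul_div_cancel₀ s (ne_of_gt hm0)] at this
end

section
/- Let k ≥ 1 be an integer. There is no nonzero polynomial q(z, r) in two variables, homogeneous of some degree d ≥ 1, satisfying q(z, 0) = 0 for all z and the equation ∂_r ( r^k ∂_r q ) + r^k ∂²_z q = 0 identically. -/
open MvPolynomial

private lemma stmt10_step (K n : ℕ) (p : MvPolynomial (Fin 2) ℝ)
    (heq : pderiv 1 ((X 1)^(K+1) * pderiv 1 ((X 1) ^ (n+1) * p))
      + (X 1)^(K+1) * pderiv 0 (pderiv 0 ((X 1)^(n+1) * p)) = 0) : X 1 ∣ p := by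
  have h01 : (0 : Fin 2) ≠ 1 := by decide
  have h10 : (1 : Fin 2) ≠ 0 := by decide
  simp only [pderiv_mul, pderiv_pow, pderiv_X_self, pderiv_X_of_ne h01, pderiv_X_of_ne h10,
    Derivation.map_natCast, pderiv_one, Nat.add_sub_cancel, map_add, mul_one, mul_zero,
    zero_mul, add_zero, zero_add, Nat.cast_add, Nat.cast_one] at heq
  have haux : (X 1 : MvPolynomial (Fin 2) ℝ) * ((n : MvPolynomial (Fin 2) ℝ) * X 1 ^ (n-1))
      = (n : MvPolynomial (Fin 2) ℝ) * X 1 ^ n := by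
    cases n with
    | zero => simp
    | succ m => simp only [Nat.add_sub_cancel]; ring
  set P1 := pderiv 1 p
  set P11 := pderiv 1 (pderiv 1 p)
  set P00 := pderiv 0 (pderiv 0 p)
  set a : MvPolynomial (Fin 2) ℝ := (n : MvPolynomial (Fin 2) ℝ) with ha
  set b : MvPolynomial (Fin 2) ℝ := (K : MvPolynomial (Fin 2) ℝ) with hb
  set g : MvPolynomial (Fin 2) ℝ := -((b + 2*a + 3) * P1 + X 1 * (P11 + P00)) with hgdef
  have key : (X 1 : MvPolynomial (Fin 2) ℝ)^(K+n)
      * (((a+1)*(b+a+1)) * p - X 1 * g) = 0 := by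
    rw [hgdef]
    linear_combination heq + (-(a+1) * p * (X 1:MvPolynomial (Fin 2) ℝ)^K) * haux
  have hx : (X 1 : MvPolynomial (Fin 2) ℝ)^(K+n) ≠ 0 := pow_ne_zero _ (X_ne_zero 1)
  have key2 : ((a+1)*(b+a+1)) * p = X 1 * g := by
    rcases mul_eq_zero.mp key with h | h
    · exact absurd h hx
    · exact sub_eq_zero.mp h
  set c : ℝ := ((n:ℝ)+1)*((K:ℝ)+(n:ℝ)+1) with hcdef
  have hcne : c ≠ 0 := by positivity
  have hcC : (C c : MvPolynomial (Fin 2) ℝ) = (a+1)*(b+a+1) := by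
    rw [hcdef, ha, hb]
    simp only [map_add, map_mul, map_pow, map_one, map_ofNat, map_natCast]
  exact ⟨C c⁻¹ * g, by
    have hp : p = C c⁻¹ * (C c * p) := by
      rw [← mul_assoc, ← map_mul, inv_mul_cancel₀ hcne, map_one, one_mul]
    rw [hp, hcC, key2]; ring⟩

private lemma stmt10_dvd_sub_aeval (q : MvPolynomial (Fin 2) ℝ) :
    X 1 ∣ q - eval₂ C (fun i : Fin 2 => if i = 0 then X 0 else 0) q := by
  induction q using MvPolynomial.induction_on with
  | C a => simp
  | add p r hp hr =>
      rw [eval₂_add]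
      have : p + r - (eval₂ C (fun i : Fin 2 => if i = 0 then X 0 else 0) p
          + eval₂ C (fun i : Fin 2 => if i = 0 then X 0 else 0) r)
        = (p - eval₂ C (fun i : Fin 2 => if i = 0 then X 0 else 0) p)
          + (r - eval₂ C (fun i : Fin 2 => if i = 0 then X 0 else 0) r) := by ring
      rw [this]
      exact dvd_add hp hr
  | mul_X p i hp =>
      rw [eval₂_mul, eval₂_X]
      have hi : i = 0 ∨ i = 1 := by omega
      rcases hi with rfl | rfl
      · simp only [eq_self_iff_true, if_true]
        have : p * X 0 - eval₂ C (fun i : Fin 2 => if i = 0 then X 0 else 0) p * X 0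
          = (p - eval₂ C (fun i : Fin 2 => if i = 0 then X 0 else 0) p) * X 0 := by ring
        rw [this]
        exact Dvd.dvd.mul_right hp _
      · have h10 : ((1 : Fin 2) = 0) = False := by simp
        simp only [h10, if_false, mul_zero, sub_zero]
        exact Dvd.dvd.mul_left dvd_rfl p

/-- Let `k ≥ 1`. There is no nonzero polynomial `q(z, r)` in two
variables (variable `0` is `z`, variable `1` is `r`), homogeneous of degree `d ≥ 1`,
vanishing on `{r = 0}` and satisfying `∂_r (r^k ∂_r q) + r^k ∂²_z q = 0` identically. -/
theorem stmt10 (k d : ℕ) (hk : 1 ≤ k) (hd : 1 ≤ d)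
    (q : MvPolynomial (Fin 2) ℝ) (hq0 : q ≠ 0)
    (hhom : q.IsHomogeneous d)
    (hvan : ∀ z : ℝ, MvPolynomial.eval (fun i => if i = 0 then z else 0) q = 0)
    (heq : pderiv 1 ((X 1) ^ k * pderiv 1 q) + (X 1) ^ k * pderiv 0 (pderiv 0 q)
      = (0 : MvPolynomial (Fin 2) ℝ)) :
    False := by
  obtain ⟨K, rfl⟩ : ∃ K, k = K + 1 := ⟨k - 1, by omega⟩
  -- Step 1: X 1 divides q
  set s : Fin 2 → MvPolynomial (Fin 2) ℝ := fun i => if i = 0 then X 0 else 0 with hs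
  have hq₀ : eval₂ C s q = 0 := by
    apply MvPolynomial.funext
    intro x
    have := eval_assoc s (x : Fin 2 → ℝ) q
    rw [← this]
    have hfun : (eval x ∘ s) = fun i : Fin 2 => if i = 0 then x 0 else (0:ℝ) := by
      funext i
      by_cases hi : i = 0 <;> simp [hs, hi]
    rw [hfun, hvan (x 0), map_zero]
  have hdvd1 : X 1 ∣ q := by
    have := stmt10_dvd_sub_aeval q
    rwa [hq₀, sub_zero] at this
  -- Step 2: X 1 ^ (m+1) divides q for all m
  have haux : ∀ m : ℕ, (X 1 : MvPolynomial (Fin 2) ℝ) ^ (m + 1) ∣ q := by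
    intro m
    induction m with
    | zero => rwa [pow_one]
    | succ m ih =>
        obtain ⟨p, hp⟩ := ih
        have hstep : X 1 ∣ p := by
          apply stmt10_step K m
          rw [← hp]
          exact heq
        obtain ⟨r, hr⟩ := hstep
        exact ⟨r, by rw [hp, hr]; ring⟩
  -- Step 3: degree contradiction
  obtain ⟨p, hp⟩ := haux d
  have hpne : p ≠ 0 := by
    intro h
    exact hq0 (by rw [hp, h, mul_zero])
  have hdegmul : ∀ (r : MvPolynomial (Fin 2) ℝ), r ≠ 0 → ∀ m : ℕ,
      degreeOf 1 (r * X 1 ^ m) = degreeOf 1 r + m := by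
    intro r hr m
    induction m with
    | zero => simp
    | succ m ih =>
        have hne : r * X 1 ^ m ≠ 0 := mul_ne_zero hr (pow_ne_zero _ (X_ne_zero 1))
        calc degreeOf 1 (r * X 1 ^ (m+1)) = degreeOf 1 ((r * X 1 ^ m) * X 1) := by ring_nf
          _ = degreeOf 1 (r * X 1 ^ m) + 1 :=
              (degreeOf_mul_X_eq_degreeOf_add_one_iff 1 (r * X 1 ^ m)).mpr hne
          _ = degreeOf 1 r + (m + 1) := by rw [ih]; ring
  have h1 : degreeOf 1 q = degreeOf 1 p + (d + 1) := by
    rw [hp, mul_comm]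
    exact hdegmul p hpne (d+1)
  have h2 : degreeOf 1 q ≤ totalDegree q := degreeOf_le_totalDegree q 1
  have h3 : totalDegree q = d := hhom.totalDegree hq0
  omega
end
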